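/- arXiv:1811.08686 — 3 statements merged into one kernel-verified Lean document; each statement's English description precedes it below -/
import Mathlib

section
/- Suppose Q ∈ 𝒫₂(ℝⁿ) and for all P₀, P₁ ∈ 𝒫₂(ℝⁿ) the HWI inequality H(P₀|Q) − H(P₁|Q) ≤ W₂(P₀,P₁)·√(I(P₀|Q)) − (κ/2) W₂²(P₀,P₁) holds with κ > 0. Then for every P ∈ 𝒫₂(ℝⁿ): (i) the Talagrand inequality W₂²(P,Q) ≤ (2/κ) H(P|Q), and (ii) the logarithmic Sobolev inequality H(P|Q) ≤ (1/(2κ)) I(P|Q). -/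
/-- From the HWI inequality with `κ > 0` one deduces the Talagrand inequality
`W₂²(P,Q) ≤ (2/κ) H(P|Q)` and the logarithmic Sobolev inequality
`H(P|Q) ≤ (1/(2κ)) I(P|Q)`. -/
theorem stmt5 {M : Type*} (Q : M) (W₂ : M → M → ℝ) (H I : M → ℝ) (κ : ℝ)
    (hκ : 0 < κ)
    (hW_symm : ∀ P₀ P₁, W₂ P₀ P₁ = W₂ P₁ P₀)
    (hW_nonneg : ∀ P₀ P₁, 0 ≤ W₂ P₀ P₁)
    (hI_nonneg : ∀ P, 0 ≤ I P)
    (hHQ : H Q = 0) (hIQ : I Q = 0)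
    (hHWI : ∀ P₀ P₁,
      H P₀ - H P₁ ≤ W₂ P₀ P₁ * Real.sqrt (I P₀) - κ / 2 * (W₂ P₀ P₁) ^ 2) :
    ∀ P, (W₂ P Q) ^ 2 ≤ 2 / κ * H P ∧ H P ≤ 1 / (2 * κ) * I P := by
  intro P
  constructor
  · have h1 := hHWI Q P
    rw [hHQ, hIQ, Real.sqrt_zero, hW_symm Q P] at h1
    rw [div_mul_eq_mul_div, le_div_iff₀ hκ]
    nlinarith [h1]
  · have h2 := hHWI P Q
    rw [hHQ] at h2
    have hs : Real.sqrt (I P) ^ 2 = I P := Real.sq_sqrt (hI_nonneg P)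
    rw [show 1 / (2 * κ) * I P = I P / (2 * κ) by ring, le_div_iff₀ (by positivity)]
    nlinarith [sq_nonneg (κ * W₂ P Q - Real.sqrt (I P)), hs,
      mul_le_mul_of_nonneg_left h2 (by positivity : (0:ℝ) ≤ 2 * κ)]
end

section
/- Let (Ω,ℱ,ℙ) be a probability space with a left-continuous filtration (ℱ(t))_{0≤t≤T}, and let (B(t))_{0≤t≤T} be an adapted continuous nonnegative process with E[∫₀ᵀ B(u)du] < ∞. Let A(t) := ∫₀ᵗ B(u)du, and fix t₀ ∈ [0,T] such that lim_{t→t₀} E[(A(t)−A(t₀))/(t−t₀)] = E[B(t₀)]. Then lim_{t↓t₀} E[A(t)−A(t₀) | ℱ(t₀)]/(t−t₀) = B(t₀) in L¹(ℙ), and lim_{t↑t₀} E[A(t₀)−A(t) | ℱ(t)]/(t₀−t) = B(t₀) in L¹(ℙ). -/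
/-!
The slopes `D t = (A t - A t₀) / (t - t₀)` are nonnegative and converge pathwise to `B t₀` by
the fundamental theorem of calculus. Fatou makes `B t₀` integrable, and since
`E[D t] → E[B t₀]`, Scheffé's lemma upgrades the pathwise convergence to convergence in `L¹`.
Conditional expectation is an `L¹` contraction; from the right `B t₀` is `ℱ(t₀)`-measurable, so
this already finishes. From the left one also needs `E[B t₀ | ℱ(t)] → B t₀` in `L¹` as `t ↑ t₀`:
left-continuity gives `ℱ(t₀) = ⋁ₙ ℱ(tₙ)` along any `tₙ ↑ t₀`, so Lévy's upward theorem applies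
along the sequence, and `‖E[X | 𝒢'] - X‖₁ ≤ 2 ‖E[X | 𝒢] - X‖₁` for `𝒢 ≤ 𝒢'` fills in the
times between.
-/

open MeasureTheory Filter Topology Set

theorem nhdsWithin_Icc_diff_singleton_neBot {α : Type*} [LinearOrder α] [TopologicalSpace α]
    [OrderTopology α] [DenselyOrdered α] {a b x : α} (hab : a < b) (hx : x ∈ Icc a b) :
    (𝓝[Icc a b \ {x}] x).NeBot := by
  rcases hx.2.lt_or_eq with hxb | rfl
  · exact (left_nhdsWithin_Ioo_neBot hxb).mono <| nhdsWithin_mono _ fun t ht =>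
      ⟨⟨hx.1.trans ht.1.le, ht.2.le⟩, ht.1.ne'⟩
  · exact (right_nhdsWithin_Ioo_neBot hab).mono <| nhdsWithin_mono _ fun t ht =>
      ⟨Ioo_subset_Icc_self ht, ht.2.ne⟩

theorem monotone_intervalIntegral_of_nonneg {f : ℝ → ℝ} (hf : Continuous f) (hf0 : ∀ u, 0 ≤ f u)
    (a : ℝ) : Monotone fun t => ∫ u in a..t, f u := fun s t hst => by
  rw [← sub_nonneg, intervalIntegral.integral_interval_sub_left (hf.intervalIntegrable _ _)
    (hf.intervalIntegrable _ _)]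
  exact intervalIntegral.integral_nonneg hst fun u _ => hf0 u

theorem stronglyMeasurable_intervalIntegral {Ω : Type*} {m0 : MeasurableSpace Ω}
    {B : ℝ → Ω → ℝ} (hB_cont : ∀ ω, Continuous fun t => B t ω)
    (hB_meas : ∀ t, StronglyMeasurable (B t)) (a b : ℝ) :
    StronglyMeasurable fun ω => ∫ u in a..b, B u ω := by
  have hB := stronglyMeasurable_uncurry_of_continuous_of_stronglyMeasurable hB_cont hB_meas
  exact hB.integral_prod_left.sub hB.integral_prod_left

theorem integrable_intervalIntegral_of_mem_Icc {Ω : Type*} {m0 : MeasurableSpace Ω}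
    {μ : Measure Ω} {B : ℝ → Ω → ℝ} (hB_cont : ∀ ω, Continuous fun t => B t ω)
    (hB_meas : ∀ t, StronglyMeasurable (B t)) (hB_nonneg : ∀ t ω, 0 ≤ B t ω) {a b t : ℝ}
    (hB_int : Integrable (fun ω => ∫ u in a..b, B u ω) μ) (ht : t ∈ Icc a b) :
    Integrable (fun ω => ∫ u in a..t, B u ω) μ := by
  refine hB_int.mono' (stronglyMeasurable_intervalIntegral hB_cont hB_meas a t).aestronglyMeasurable
    (.of_forall fun ω => ?_)
  rw [Real.norm_of_nonneg (intervalIntegral.integral_nonneg ht.1 fun u _ => hB_nonneg u ω)]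
  exact monotone_intervalIntegral_of_nonneg (hB_cont ω) (hB_nonneg · ω) a ht.2

section Scheffe

variable {Ω ι : Type*} {m0 : MeasurableSpace Ω} {μ : Measure Ω} {l : Filter ι}
  [l.IsCountablyGenerated] {f : ι → Ω → ℝ} {g : Ω → ℝ}

theorem integrable_of_tendsto_integral_of_nonneg [l.NeBot] {c : ℝ}
    (hf_nonneg : ∀ᶠ i in l, 0 ≤ᵐ[μ] f i) (hf_meas : ∀ i, AEStronglyMeasurable (f i) μ)
    (hf_int : ∀ᶠ i in l, Integrable (f i) μ)
    (hlim : ∀ᵐ ω ∂μ, Tendsto (fun i => f i ω) l (𝓝 (g ω)))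
    (hc : Tendsto (fun i => ∫ ω, f i ω ∂μ) l (𝓝 c)) :
    Integrable g μ := by
  refine ⟨aestronglyMeasurable_of_tendsto_ae l hf_meas hlim, ?_⟩
  have hf_lintegral : ∀ᶠ i in l, ∫⁻ ω, ‖f i ω‖ₑ ∂μ = ENNReal.ofReal (∫ ω, f i ω ∂μ) := by
    filter_upwards [hf_nonneg, hf_int] with i hi_nonneg hi_int
    rw [← ofReal_integral_norm_eq_lintegral_enorm hi_int]
    exact congrArg _ <| integral_congr_ae <| hi_nonneg.mono fun ω hω => Real.norm_of_nonneg hω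
  calc ∫⁻ ω, ‖g ω‖ₑ ∂μ = ∫⁻ ω, liminf (fun i => ‖f i ω‖ₑ) l ∂μ :=
        lintegral_congr_ae <| hlim.mono fun ω hω => hω.enorm.liminf_eq.symm
    _ ≤ liminf (fun i => ∫⁻ ω, ‖f i ω‖ₑ ∂μ) l :=
        lintegral_liminf_le' fun i => (hf_meas i).enorm
    _ = ENNReal.ofReal c := by
        rw [liminf_congr hf_lintegral]
        exact ((ENNReal.continuous_ofReal.tendsto c).comp hc).liminf_eq
    _ < ⊤ := ENNReal.ofReal_lt_top

theorem tendsto_integral_abs_sub_of_tendsto_integral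
    (hf_nonneg : ∀ᶠ i in l, 0 ≤ᵐ[μ] f i) (hf_int : ∀ᶠ i in l, Integrable (f i) μ)
    (hg : Integrable g μ) (hlim : ∀ᵐ ω ∂μ, Tendsto (fun i => f i ω) l (𝓝 (g ω)))
    (hc : Tendsto (fun i => ∫ ω, f i ω ∂μ) l (𝓝 (∫ ω, g ω ∂μ))) :
    Tendsto (fun i => ∫ ω, |f i ω - g ω| ∂μ) l (𝓝 0) := by
  -- `|f - g| = (f - g) + 2 (g - f)⁺`, and `0 ≤ (g - f)⁺ ≤ |g|` since `f ≥ 0`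
  have hpos : Tendsto (fun i => ∫ ω, max (g ω - f i ω) 0 ∂μ) l (𝓝 (∫ _, (0 : ℝ) ∂μ)) := by
    refine tendsto_integral_filter_of_dominated_convergence (fun ω => |g ω|)
      (hf_int.mono fun i hi => (hg.sub hi).pos_part.aestronglyMeasurable) ?_ hg.abs ?_
    · filter_upwards [hf_nonneg] with i hi
      filter_upwards [hi] with ω (hω : 0 ≤ f i ω)
      rw [Real.norm_of_nonneg (le_max_right _ _)]
      exact max_le (by linarith [le_abs_self (g ω), hω]) (abs_nonneg _)
    · filter_upwards [hlim] with ω hω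
      simpa using ((tendsto_const_nhds (x := g ω)).sub hω).max (tendsto_const_nhds (x := (0 : ℝ)))
  have hsplit : ∀ᶠ i in l, ∫ ω, f i ω ∂μ - ∫ ω, g ω ∂μ + 2 * ∫ ω, max (g ω - f i ω) 0 ∂μ
      = ∫ ω, |f i ω - g ω| ∂μ := by
    filter_upwards [hf_int] with i hi
    have hpt : ∀ ω, |f i ω - g ω| = (f i ω - g ω) + 2 * max (g ω - f i ω) 0 := fun ω => by
      rcases le_total (f i ω) (g ω) with h | h
      · rw [abs_of_nonpos (sub_nonpos.2 h), max_eq_left (sub_nonneg.2 h)]; ring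
      · rw [abs_of_nonneg (sub_nonneg.2 h), max_eq_right (sub_nonpos.2 h)]; ring
    simp_rw [hpt]
    have hfg : Integrable (fun ω => f i ω - g ω) μ := hi.sub hg
    have hgf : Integrable (fun ω => 2 * max (g ω - f i ω) 0) μ := (hg.sub hi).pos_part.const_mul 2
    rw [integral_add hfg hgf, integral_sub hi hg, integral_const_mul]
  simpa using ((hc.sub tendsto_const_nhds).add (hpos.const_mul 2)).congr' hsplit

end Scheffe

section CondExp

variable {Ω : Type*} {m m' m0 : MeasurableSpace Ω} {μ : Measure Ω} {f g h : Ω → ℝ}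

theorem integral_abs_sub_le_add (hf : Integrable f μ) (hg : Integrable g μ)
    (hh : Integrable h μ) :
    ∫ ω, |f ω - h ω| ∂μ ≤ ∫ ω, |f ω - g ω| ∂μ + ∫ ω, |g ω - h ω| ∂μ := by
  have hfg : Integrable (fun ω => |f ω - g ω|) μ := (hf.sub hg).abs
  have hgh : Integrable (fun ω => |g ω - h ω|) μ := (hg.sub hh).abs
  rw [← integral_add hfg hgh]
  exact integral_mono (hf.sub hh).abs (hfg.add hgh) fun ω => abs_sub_le _ _ _

theorem integral_abs_condExp_sub_condExp_le (hf : Integrable f μ) (hg : Integrable g μ) :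
    ∫ ω, |μ[f|m] ω - μ[g|m] ω| ∂μ ≤ ∫ ω, |f ω - g ω| ∂μ :=
  calc ∫ ω, |μ[f|m] ω - μ[g|m] ω| ∂μ = ∫ ω, |μ[f - g|m] ω| ∂μ :=
        integral_congr_ae <| (condExp_sub hf hg m).mono fun ω hω => by simp only [hω, Pi.sub_apply]
    _ ≤ ∫ ω, |f ω - g ω| ∂μ := integral_abs_condExp_le _

theorem condExp_div_const (f : Ω → ℝ) (c : ℝ) (m : MeasurableSpace Ω) :
    μ[fun ω => f ω / c|m] =ᵐ[μ] fun ω => μ[f|m] ω / c := by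
  have hdiv : (fun ω => f ω / c) = c⁻¹ • f := funext fun ω => div_eq_inv_mul _ _
  rw [hdiv]
  filter_upwards [condExp_smul c⁻¹ f m] with ω hω
  rw [hω, Pi.smul_apply, smul_eq_mul, div_eq_inv_mul]

variable [IsFiniteMeasure μ]

theorem integral_abs_condExp_sub_le_two_mul (hmm' : m ≤ m') (hm' : m' ≤ m0)
    (hf : Integrable f μ) :
    ∫ ω, |μ[f|m'] ω - f ω| ∂μ ≤ 2 * ∫ ω, |μ[f|m] ω - f ω| ∂μ := by
  have hproj : μ[μ[f|m]|m'] = μ[f|m] :=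
    condExp_of_stronglyMeasurable hm' (stronglyMeasurable_condExp.mono hmm') integrable_condExp
  calc ∫ ω, |μ[f|m'] ω - f ω| ∂μ
      ≤ ∫ ω, |μ[f|m'] ω - μ[μ[f|m]|m'] ω| ∂μ + ∫ ω, |μ[f|m] ω - f ω| ∂μ := by
        rw [hproj]; exact integral_abs_sub_le_add integrable_condExp integrable_condExp hf
    _ ≤ ∫ ω, |f ω - μ[f|m] ω| ∂μ + ∫ ω, |μ[f|m] ω - f ω| ∂μ := by
        grw [integral_abs_condExp_sub_condExp_le hf integrable_condExp]
    _ = 2 * ∫ ω, |μ[f|m] ω - f ω| ∂μ := by simp_rw [abs_sub_comm (f _)]; ring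

theorem tendsto_integral_abs_condExp_sub_of_stronglyMeasurable {ι : Type*} {l : Filter ι}
    {f : ι → Ω → ℝ} (hm : m ≤ m0) (hgm : StronglyMeasurable[m] g) (hg : Integrable g μ)
    (hf_int : ∀ᶠ i in l, Integrable (f i) μ)
    (hf : Tendsto (fun i => ∫ ω, |f i ω - g ω| ∂μ) l (𝓝 0)) :
    Tendsto (fun i => ∫ ω, |μ[f i|m] ω - g ω| ∂μ) l (𝓝 0) := by
  refine squeeze_zero' (.of_forall fun i => integral_nonneg fun ω => abs_nonneg _) ?_ hf
  filter_upwards [hf_int] with i hi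
  simpa only [condExp_of_stronglyMeasurable hm hgm hg] using
    integral_abs_condExp_sub_condExp_le (m := m) hi hg

theorem tendsto_integral_abs_condExp_sub_nhdsLT (F : Filtration ℝ m0) {t₀ : ℝ}
    (hF : F t₀ ≤ ⨆ s ∈ Iio t₀, F s) (hgm : StronglyMeasurable[F t₀] g) (hg : Integrable g μ) :
    Tendsto (fun t => ∫ ω, |μ[g|F t] ω - g ω| ∂μ) (𝓝[<] t₀) (𝓝 0) := by
  obtain ⟨v, hv_mono, hv_lt, hv_lim⟩ := exists_seq_strictMono_tendsto t₀
  let G : Filtration ℕ m0 :=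
    ⟨fun n => F (v n), fun _ _ hij => F.mono (hv_mono.monotone hij), fun n => F.le (v n)⟩
  have hG : ⨆ n, G n = F t₀ := by
    refine le_antisymm (iSup_le fun n => F.mono (hv_lt n).le)
      (hF.trans (iSup₂_le fun s hs => ?_))
    obtain ⟨n, hn⟩ := (hv_lim.eventually (eventually_gt_nhds hs)).exists
    exact (F.mono hn.le).trans (le_iSup (fun n => G n) n)
  have hLevy : Tendsto (fun n => ∫ ω, |μ[g|F (v n)] ω - g ω| ∂μ) atTop (𝓝 0) := by
    refine ((ENNReal.tendsto_toReal ENNReal.zero_ne_top).comp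
      (hg.tendsto_eLpNorm_condExp (ℱ := G) (hG ▸ hgm))).congr fun n => ?_
    rw [Function.comp_apply, toReal_eLpNorm (integrable_condExp.sub hg).aestronglyMeasurable,
      lpNorm_one_eq_integral_norm (integrable_condExp.sub hg).aestronglyMeasurable]
    rfl
  refine tendsto_order.2 ⟨fun a ha => .of_forall fun t =>
    ha.trans_le (integral_nonneg fun ω => abs_nonneg _), fun a ha => ?_⟩
  obtain ⟨n, hn⟩ := ((hLevy.const_mul 2).eventually (gt_mem_nhds (by rwa [mul_zero]))).exists
  filter_upwards [(eventually_gt_nhds (hv_lt n)).filter_mono nhdsWithin_le_nhds] with t ht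
  exact (integral_abs_condExp_sub_le_two_mul (F.mono ht.le) (F.le t) hg).trans_lt hn

theorem tendsto_integral_abs_condExp_filtration_sub_of_le_nhdsLT (F : Filtration ℝ m0) {t₀ : ℝ}
    (hF : F t₀ ≤ ⨆ s ∈ Iio t₀, F s) (hgm : StronglyMeasurable[F t₀] g) (hg : Integrable g μ)
    {l : Filter ℝ} (hl : l ≤ 𝓝[<] t₀) {f : ℝ → Ω → ℝ} (hf_int : ∀ᶠ t in l, Integrable (f t) μ)
    (hf : Tendsto (fun t => ∫ ω, |f t ω - g ω| ∂μ) l (𝓝 0)) :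
    Tendsto (fun t => ∫ ω, |μ[f t|F t] ω - g ω| ∂μ) l (𝓝 0) := by
  refine squeeze_zero' (.of_forall fun t => integral_nonneg fun ω => abs_nonneg _) ?_
    (by simpa using hf.add ((tendsto_integral_abs_condExp_sub_nhdsLT F hF hgm hg).mono_left hl))
  filter_upwards [hf_int] with t ht
  calc ∫ ω, |μ[f t|F t] ω - g ω| ∂μ
      ≤ ∫ ω, |μ[f t|F t] ω - μ[g|F t] ω| ∂μ + ∫ ω, |μ[g|F t] ω - g ω| ∂μ :=
        integral_abs_sub_le_add integrable_condExp integrable_condExp hg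
    _ ≤ ∫ ω, |f t ω - g ω| ∂μ + ∫ ω, |μ[g|F t] ω - g ω| ∂μ := by
        grw [integral_abs_condExp_sub_condExp_le ht hg]

end CondExp

theorem integrable_and_tendsto_integral_abs_div_sub_of_monotone {Ω : Type*}
    {m0 : MeasurableSpace Ω} {μ : Measure Ω} {A : ℝ → Ω → ℝ} {b : Ω → ℝ} {t₀ : ℝ}
    {l : Filter ℝ} [l.NeBot] [l.IsCountablyGenerated] (hl : l ≤ 𝓝[≠] t₀)
    (hA_mono : ∀ ω, Monotone fun t => A t ω)
    (hA_deriv : ∀ ω, HasDerivAt (fun t => A t ω) (b ω) t₀)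
    (hA_meas : ∀ t, AEStronglyMeasurable (A t) μ)
    (hD_int : ∀ᶠ t in l, Integrable (fun ω => (A t ω - A t₀ ω) / (t - t₀)) μ)
    (hLeb : Tendsto (fun t => ∫ ω, (A t ω - A t₀ ω) / (t - t₀) ∂μ) l (𝓝 (∫ ω, b ω ∂μ))) :
    Integrable b μ ∧ Tendsto (fun t => ∫ ω, |(A t ω - A t₀ ω) / (t - t₀) - b ω| ∂μ) l (𝓝 0) := by
  have hD_nonneg : ∀ᶠ t in l, 0 ≤ᵐ[μ] fun ω => (A t ω - A t₀ ω) / (t - t₀) :=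
    .of_forall fun t => .of_forall fun ω => show (0 : ℝ) ≤ _ by
      simpa only [slope_def_field] using
        ((hA_mono ω).monotoneOn univ).slope_nonneg (mem_univ t₀) (mem_univ t)
  have hD_lim : ∀ᵐ ω ∂μ, Tendsto (fun t => (A t ω - A t₀ ω) / (t - t₀)) l (𝓝 (b ω)) :=
    .of_forall fun ω => ((hasDerivAt_iff_tendsto_slope.1 (hA_deriv ω)).mono_left hl).congr
      fun t => slope_def_field _ _ _
  have hb := integrable_of_tendsto_integral_of_nonneg hD_nonneg
    (fun t => by have := hA_meas t; have := hA_meas t₀; fun_prop) hD_int hD_lim hLeb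
  exact ⟨hb, tendsto_integral_abs_sub_of_tendsto_integral hD_nonneg hD_int hb hD_lim hLeb⟩

/-- Trajectorial differentiation of time integrals under conditional expectations:
if `t₀` is a Lebesgue point for the expected difference quotient of
`A(t) = ∫₀ᵗ B(u) du`, then the conditional-expectation difference quotients converge
to `B(t₀)` in `L¹(ℙ)`, from the right (conditioning on `ℱ(t₀)`) and from the left
(conditioning on `ℱ(t)`). -/
theorem stmt8 {Ω : Type*} {m0 : MeasurableSpace Ω} (ℙ : Measure Ω)
    [IsProbabilityMeasure ℙ]
    (T : ℝ) (hT : 0 < T) (F : Filtration ℝ m0)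
    (hF_left : ∀ t ∈ Set.Ioc (0 : ℝ) T,
      (F t : MeasurableSpace Ω) = ⨆ s ∈ Set.Iio t, (F s : MeasurableSpace Ω))
    (B : ℝ → Ω → ℝ)
    (hB_cont : ∀ ω, Continuous fun t => B t ω)
    (hB_adapted : ∀ t, StronglyMeasurable[F t] (B t))
    (hB_nonneg : ∀ t ω, 0 ≤ B t ω)
    (hB_int : Integrable (fun ω => ∫ u in (0 : ℝ)..T, B u ω) ℙ)
    (A : ℝ → Ω → ℝ) (hA : ∀ t ω, A t ω = ∫ u in (0 : ℝ)..t, B u ω)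
    (t₀ : ℝ) (ht₀ : t₀ ∈ Set.Icc (0 : ℝ) T)
    (hLeb : Tendsto (fun t => ∫ ω, (A t ω - A t₀ ω) / (t - t₀) ∂ℙ)
      (nhdsWithin t₀ (Set.Icc 0 T \ {t₀})) (nhds (∫ ω, B t₀ ω ∂ℙ))) :
    Tendsto
        (fun t => ∫ ω,
          |(ℙ[fun ω' => A t ω' - A t₀ ω' | F t₀]) ω / (t - t₀) - B t₀ ω| ∂ℙ)
        (nhdsWithin t₀ (Set.Ioc t₀ T)) (nhds 0) ∧
      Tendsto
        (fun t => ∫ ω,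
          |(ℙ[fun ω' => A t₀ ω' - A t ω' | F t]) ω / (t₀ - t) - B t₀ ω| ∂ℙ)
        (nhdsWithin t₀ (Set.Ico 0 t₀)) (nhds 0) := by
  have hB_meas : ∀ t, StronglyMeasurable (B t) := fun t => (hB_adapted t).mono (F.le t)
  have hA_mono : ∀ ω, Monotone fun t => A t ω := fun ω => by
    simpa only [hA] using monotone_intervalIntegral_of_nonneg (hB_cont ω) (hB_nonneg · ω) 0
  have hA_meas : ∀ t, StronglyMeasurable (A t) := fun t => by
    simpa only [← hA] using stronglyMeasurable_intervalIntegral hB_cont hB_meas 0 t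
  have hA_int : ∀ t ∈ Icc 0 T, Integrable (A t) ℙ := fun t ht => by
    simpa only [← hA] using
      integrable_intervalIntegral_of_mem_Icc hB_cont hB_meas hB_nonneg hB_int ht
  have hD_int : ∀ᶠ t in 𝓝[Icc 0 T \ {t₀}] t₀,
      Integrable (fun ω => (A t ω - A t₀ ω) / (t - t₀)) ℙ :=
    eventually_mem_nhdsWithin.mono fun t ht => ((hA_int t ht.1).sub (hA_int t₀ ht₀)).div_const _
  have hne : (𝓝[Icc 0 T \ {t₀}] t₀).NeBot := nhdsWithin_Icc_diff_singleton_neBot hT ht₀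
  obtain ⟨hB₀, hL1⟩ := integrable_and_tendsto_integral_abs_div_sub_of_monotone
    (nhdsWithin_mono _ (sdiff_subset_compl _ _)) hA_mono
    (fun ω => by simpa only [hA] using ((hB_cont ω).integral_hasStrictDerivAt 0 t₀).hasDerivAt)
    (fun t => (hA_meas t).aestronglyMeasurable) hD_int hLeb
  constructor
  · have hle : 𝓝[Ioc t₀ T] t₀ ≤ 𝓝[Icc 0 T \ {t₀}] t₀ :=
      nhdsWithin_mono _ fun t ht => ⟨⟨ht₀.1.trans ht.1.le, ht.2⟩, ht.1.ne'⟩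
    refine (tendsto_integral_abs_condExp_sub_of_stronglyMeasurable (F.le t₀) (hB_adapted t₀) hB₀
      (hD_int.filter_mono hle) (hL1.mono_left hle)).congr fun t => ?_
    exact integral_congr_ae <| (condExp_div_const (fun ω => A t ω - A t₀ ω) (t - t₀) (F t₀)).mono
      fun ω hω => by simp only [hω]
  · rcases ht₀.1.eq_or_lt with rfl | ht₀_pos
    · simp
    have hle : 𝓝[Ico 0 t₀] t₀ ≤ 𝓝[Icc 0 T \ {t₀}] t₀ :=
      nhdsWithin_mono _ fun t ht => ⟨⟨ht.1, ht.2.le.trans ht₀.2⟩, ht.2.ne⟩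
    refine (tendsto_integral_abs_condExp_filtration_sub_of_le_nhdsLT F
      (hF_left t₀ ⟨ht₀_pos, ht₀.2⟩).le (hB_adapted t₀) hB₀ (nhdsWithin_mono _ Ico_subset_Iio_self)
      (hD_int.filter_mono hle) (hL1.mono_left hle)).congr fun t => ?_
    have hquot : (fun ω => (A t ω - A t₀ ω) / (t - t₀)) = fun ω => (A t₀ ω - A t ω) / (t₀ - t) :=
      funext fun ω => by rw [← neg_sub (A t₀ ω), ← neg_sub t₀, neg_div_neg_eq]
    rw [hquot]
    exact integral_congr_ae <| (condExp_div_const (fun ω => A t₀ ω - A t ω) (t₀ - t) (F t)).mono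
      fun ω hω => by simp only [hω]
end

section
/- Let p, p^β : [t₀,T] × ℝⁿ → (0,∞) be the solutions of the Fokker–Planck equations for potentials Ψ and Ψ + B respectively, with the same initial density at t₀, where B is smooth and compactly supported with β = ∇B. Then the ratio Y^β(t,x) := p^β(t,x)/p(t,x) satisfies the PDE ∂_t Y^β = (1/2)ΔY^β + ⟨∇Y^β, β + ∇log p + ∇Ψ⟩ + Y^β (div β + ⟨β, ∇log p⟩) for t > t₀, with Y^β(t₀,·) ≡ 1. -/
open Real MeasureTheory
open scoped RealInnerProductSpace

noncomputable section

/-- Partial derivative in coordinate direction `i`. -/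
def pd {n : ℕ} (i : Fin n) (f : EuclideanSpace ℝ (Fin n) → ℝ)
    (x : EuclideanSpace ℝ (Fin n)) : ℝ :=
  fderiv ℝ f x (EuclideanSpace.single i 1)

/-- Divergence of a vector field on `ℝⁿ`. -/
def divergence {n : ℕ} (v : EuclideanSpace ℝ (Fin n) → EuclideanSpace ℝ (Fin n))
    (x : EuclideanSpace ℝ (Fin n)) : ℝ :=
  ∑ i, fderiv ℝ (fun y => v y i) x (EuclideanSpace.single i 1)

/-- Laplacian of a scalar field on `ℝⁿ`. -/
def laplacian {n : ℕ} (f : EuclideanSpace ℝ (Fin n) → ℝ)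
    (x : EuclideanSpace ℝ (Fin n)) : ℝ :=
  ∑ i, pd i (fun y => pd i f y) x

section Aux

variable {n : ℕ}

theorem pd_def (i : Fin n) (f : EuclideanSpace ℝ (Fin n) → ℝ) (x : EuclideanSpace ℝ (Fin n)) :
    pd i f x = fderiv ℝ f x (EuclideanSpace.single i 1) := rfl

theorem contDiff_pd {f : EuclideanSpace ℝ (Fin n) → ℝ} (hf : ContDiff ℝ (⊤ : ℕ∞) f) (i : Fin n) :
    ContDiff ℝ (⊤ : ℕ∞) (pd i f) :=
  (hf.fderiv_right le_rfl).clm_apply contDiff_const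

theorem pd_add {f g : EuclideanSpace ℝ (Fin n) → ℝ} {x : EuclideanSpace ℝ (Fin n)}
    (hf : DifferentiableAt ℝ f x) (hg : DifferentiableAt ℝ g x) (i : Fin n) :
    pd i (fun y => f y + g y) x = pd i f x + pd i g x := by
  simp [pd, fderiv_fun_add hf hg]

theorem pd_mul {f g : EuclideanSpace ℝ (Fin n) → ℝ} {x : EuclideanSpace ℝ (Fin n)}
    (hf : DifferentiableAt ℝ f x)
    (hg : DifferentiableAt ℝ g x) (i : Fin n) :
    pd i (fun y => f y * g y) x = pd i f x * g x + f x * pd i g x := by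
  simp [pd, fderiv_fun_mul hf hg]; ring

theorem pd_log {f : EuclideanSpace ℝ (Fin n) → ℝ} {x : EuclideanSpace ℝ (Fin n)}
    (hf : DifferentiableAt ℝ f x) (hf0 : f x ≠ 0) (i : Fin n) :
    pd i (fun y => Real.log (f y)) x = pd i f x / f x := by
  have := (hf.hasFDerivAt.log hf0).fderiv
  simp [pd, this]
  ring

theorem gradient_apply (f : EuclideanSpace ℝ (Fin n) → ℝ) (x : EuclideanSpace ℝ (Fin n))
    (i : Fin n) : gradient f x i = pd i f x := by
  have h1 : gradient f x i = ⟪gradient f x, EuclideanSpace.single i 1⟫ := by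
    rw [EuclideanSpace.inner_single_right]; simp
  rw [h1, gradient, pd_def]
  simp [InnerProductSpace.toDual_symm_apply]

theorem inner_sum_pd (a b : EuclideanSpace ℝ (Fin n)) :
    ⟪a, b⟫ = ∑ i, a i * b i := by
  simp [PiLp.inner_apply, mul_comm]

end Aux

/-- The perturbed-to-unperturbed ratio `Y^β = p^β/p` of Fokker–Planck solutions for
the potentials `Ψ` and `Ψ + B` (same initial condition at `t₀`, `β = ∇B`) satisfies
`∂ₜ Y^β = (1/2) ΔY^β + ⟨∇Y^β, β + ∇log p + ∇Ψ⟩ + Y^β (div β + ⟨β, ∇log p⟩)` for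
`t > t₀`, with `Y^β(t₀,·) ≡ 1`. -/
theorem stmt13 {n : ℕ} (Ψ B : EuclideanSpace ℝ (Fin n) → ℝ)
    (hΨ : ContDiff ℝ (⊤ : ℕ∞) Ψ) (hΨ0 : ∀ x, 0 ≤ Ψ x)
    (hB : ContDiff ℝ (⊤ : ℕ∞) B) (hBsupp : HasCompactSupport B)
    (β : EuclideanSpace ℝ (Fin n) → EuclideanSpace ℝ (Fin n))
    (hβ : ∀ x, β x = gradient B x)
    (t₀ : ℝ) (ht₀ : 0 ≤ t₀)
    (p pβ : ℝ → EuclideanSpace ℝ (Fin n) → ℝ)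
    (hp_pos : ∀ t x, 0 < p t x) (hpβ_pos : ∀ t x, 0 < pβ t x)
    (hp_x : ∀ t, ContDiff ℝ (⊤ : ℕ∞) (p t)) (hpβ_x : ∀ t, ContDiff ℝ (⊤ : ℕ∞) (pβ t))
    (hFP : ∀ (x : EuclideanSpace ℝ (Fin n)) (t : ℝ), t₀ < t →
      HasDerivAt (fun s => p s x)
        (divergence (fun y => p t y • gradient Ψ y) x + (1/2) * laplacian (p t) x) t)
    (hFPβ : ∀ (x : EuclideanSpace ℝ (Fin n)) (t : ℝ), t₀ < t →
      HasDerivAt (fun s => pβ s x)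
        (divergence (fun y => pβ t y • (gradient Ψ y + β y)) x
          + (1/2) * laplacian (pβ t) x) t)
    (hinit : ∀ x, pβ t₀ x = p t₀ x)
    (Y : ℝ → EuclideanSpace ℝ (Fin n) → ℝ)
    (hY : ∀ t x, Y t x = pβ t x / p t x) :
    (∀ x, Y t₀ x = 1) ∧
    ∀ (x : EuclideanSpace ℝ (Fin n)) (t : ℝ), t₀ < t →
      HasDerivAt (fun s => Y s x)
        ((1/2) * laplacian (Y t) x
          + ⟪gradient (Y t) x,
              β x + gradient (fun y => Real.log (p t y)) x + gradient Ψ x⟫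
          + Y t x * (divergence β x
              + ⟪β x, gradient (fun y => Real.log (p t y)) x⟫)) t := by
  constructor
  · intro x
    rw [hY, hinit, div_self (hp_pos t₀ x).ne']
  intro x t ht
  -- notation and differentiability facts
  have hF0 : ∀ y, p t y ≠ 0 := fun y => (hp_pos t y).ne'
  have hfc : ContDiff ℝ (⊤ : ℕ∞) (p t) := hp_x t
  have hgc : ContDiff ℝ (⊤ : ℕ∞) (pβ t) := hpβ_x t
  have hfd : Differentiable ℝ (p t) := hfc.differentiable (by simp)
  have hgd : Differentiable ℝ (pβ t) := hgc.differentiable (by simp)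
  have hΨd : Differentiable ℝ Ψ := hΨ.differentiable (by simp)
  have hBd : Differentiable ℝ B := hB.differentiable (by simp)
  have hYt : Y t = fun y => pβ t y * (p t y)⁻¹ := by
    funext y; rw [hY, div_eq_mul_inv]
  have hHc : ContDiff ℝ (⊤ : ℕ∞) (Y t) := by
    rw [hYt]; exact hgc.mul (hfc.inv hF0)
  have hHd : Differentiable ℝ (Y t) := hHc.differentiable (by simp)
  have hgfun : pβ t = fun y => Y t y * p t y := by
    funext y; rw [hY]; exact (div_mul_cancel₀ _ (hF0 y)).symm
  have hgx : pβ t x = Y t x * p t x := congrFun hgfun x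
  -- differentiability of first partials
  have hfd2 : ∀ i : Fin n, Differentiable ℝ (pd i (p t)) :=
    fun i => (contDiff_pd hfc i).differentiable (by simp)
  have hHd2 : ∀ i : Fin n, Differentiable ℝ (pd i (Y t)) :=
    fun i => (contDiff_pd hHc i).differentiable (by simp)
  have hΨd2 : ∀ i : Fin n, Differentiable ℝ (pd i Ψ) :=
    fun i => (contDiff_pd hΨ i).differentiable (by simp)
  have hBd2 : ∀ i : Fin n, Differentiable ℝ (pd i B) :=
    fun i => (contDiff_pd hB i).differentiable (by simp)
  -- pβ t partials in terms of Y t and p t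
  have hg_pd : ∀ (i : Fin n) (y : EuclideanSpace ℝ (Fin n)),
      pd i (pβ t) y = pd i (Y t) y * p t y + Y t y * pd i (p t) y := by
    intro i y
    rw [hgfun]
    exact pd_mul (hHd y) (hfd y) i
  have hg_pd2 : ∀ (i : Fin n) (y : EuclideanSpace ℝ (Fin n)),
      pd i (pd i (pβ t)) y
        = pd i (pd i (Y t)) y * p t y + 2 * pd i (Y t) y * pd i (p t) y
          + Y t y * pd i (pd i (p t)) y := by
    intro i y
    have h1 : pd i (pβ t) = fun z => pd i (Y t) z * p t z + Y t z * pd i (p t) z :=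
      funext fun z => hg_pd i z
    rw [h1, pd_add ((hHd2 i y).fun_mul (hfd y)) ((hHd y).fun_mul (hfd2 i y)) i,
      pd_mul (hHd2 i y) (hfd y) i, pd_mul (hHd y) (hfd2 i y) i]
    ring
  -- rewrite the FP right-hand side for p
  have hA : divergence (fun y => p t y • gradient Ψ y) x + (1/2) * laplacian (p t) x
      = ∑ i, (pd i (p t) x * pd i Ψ x + p t x * pd i (pd i Ψ) x
          + (1/2) * pd i (pd i (p t)) x) := by
    unfold divergence laplacian
    rw [Finset.mul_sum, ← Finset.sum_add_distrib]
    refine Finset.sum_congr rfl fun i _ => ?_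
    have hcomp : (fun y => (p t y • gradient Ψ y) i) = fun y => p t y * pd i Ψ y := by
      funext y
      simp [gradient_apply]
    rw [← pd_def, hcomp, pd_mul (hfd x) (hΨd2 i x) i]
  -- rewrite the FP right-hand side for pβ
  have hAβ : divergence (fun y => pβ t y • (gradient Ψ y + β y)) x
        + (1/2) * laplacian (pβ t) x
      = ∑ i, ((pd i (Y t) x * p t x + Y t x * pd i (p t) x) * (pd i Ψ x + pd i B x)
          + (Y t x * p t x) * (pd i (pd i Ψ) x + pd i (pd i B) x)
          + (1/2) * (pd i (pd i (Y t)) x * p t x + 2 * pd i (Y t) x * pd i (p t) x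
              + Y t x * pd i (pd i (p t)) x)) := by
    unfold divergence laplacian
    rw [Finset.mul_sum, ← Finset.sum_add_distrib]
    refine Finset.sum_congr rfl fun i _ => ?_
    have hcomp : (fun y => (pβ t y • (gradient Ψ y + β y)) i)
        = fun y => pβ t y * (pd i Ψ y + pd i B y) := by
      funext y
      simp [hβ, gradient_apply, mul_add]
    rw [← pd_def, hcomp, pd_mul (hgd x) ((hΨd2 i x).fun_add (hBd2 i x)) i,
      pd_add (hΨd2 i x) (hBd2 i x) i, hg_pd i x, hg_pd2 i x, hgx]
    try ring
  -- rewrite the target expression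
  have hβcomp : ∀ i : Fin n, (fun y => β y i) = fun y => pd i B y := by
    intro i; funext y; rw [hβ, gradient_apply]
  have hdivβ : divergence β x = ∑ i, pd i (pd i B) x := by
    unfold divergence
    refine Finset.sum_congr rfl fun i _ => ?_
    rw [← pd_def, hβcomp i]
  have hlogpd : ∀ i : Fin n, pd i (fun y => Real.log (p t y)) x = pd i (p t) x / p t x :=
    fun i => pd_log (hfd x) (hF0 x) i
  have hT : (1/2) * laplacian (Y t) x
        + ⟪gradient (Y t) x,
            β x + gradient (fun y => Real.log (p t y)) x + gradient Ψ x⟫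
        + Y t x * (divergence β x
            + ⟪β x, gradient (fun y => Real.log (p t y)) x⟫)
      = ∑ i, ((1/2) * pd i (pd i (Y t)) x
          + pd i (Y t) x * (pd i B x + pd i (p t) x / p t x + pd i Ψ x)
          + Y t x * (pd i (pd i B) x + pd i B x * (pd i (p t) x / p t x))) := by
    rw [hdivβ, inner_sum_pd, inner_sum_pd]
    unfold laplacian
    have h1 : ∀ i : Fin n,
        gradient (Y t) x i * (β x + gradient (fun y => Real.log (p t y)) x + gradient Ψ x) i
          = pd i (Y t) x * (pd i B x + pd i (p t) x / p t x + pd i Ψ x) := by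
      intro i
      have : (β x + gradient (fun y => Real.log (p t y)) x + gradient Ψ x) i
          = pd i B x + pd i (p t) x / p t x + pd i Ψ x := by
        simp only [PiLp.add_apply]
        rw [hβ, gradient_apply, gradient_apply, gradient_apply, hlogpd i]
      rw [this, gradient_apply]
    have h2 : ∀ i : Fin n,
        β x i * gradient (fun y => Real.log (p t y)) x i
          = pd i B x * (pd i (p t) x / p t x) := by
      intro i
      rw [hβ, gradient_apply, gradient_apply, hlogpd i]
    simp only [h1]
    conv_lhs =>
      rw [show (∑ i, β x i * gradient (fun y => Real.log (p t y)) x i)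
          = ∑ i, pd i B x * (pd i (p t) x / p t x) from Finset.sum_congr rfl fun i _ => h2 i]
    rw [Finset.mul_sum, ← Finset.sum_add_distrib, mul_add, Finset.mul_sum, Finset.mul_sum,
      ← Finset.sum_add_distrib, ← Finset.sum_add_distrib]
    refine Finset.sum_congr rfl fun i _ => ?_
    ring
  -- time derivative via quotient rule
  have hfun : (fun s => Y s x) = fun s => pβ s x / p s x := funext fun s => hY s x
  rw [hfun]
  have hder := (hFPβ x t ht).fun_div (hFP x t ht) (hF0 x)
  refine hder.congr_deriv ?_
  symm
  rw [hT, hAβ, hA, hY t x]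
  rw [Finset.sum_mul, Finset.mul_sum, ← Finset.sum_sub_distrib, Finset.sum_div]
  refine Finset.sum_congr rfl fun i _ => ?_
  have hne := hF0 x
  field_simp
  ring
end
end
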